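/- arXiv:math/0405331 — 4 statements merged into one kernel-verified Lean document; each statement's English description precedes it below -/
import Mathlib

section
/- Let I be a compact interval, ε' > 0, d ≥ 1, and for m = 1,…,d let Φ_m : I × [0,ε'] → ℂ be continuous functions such that Φ_m(x,ε) = Φ_{m,0}(x) + O(ε) uniformly in x ∈ I as ε → 0⁺, where Φ_{m,0}(x) := Φ_m(x,0). Let c_m : [0,ε'] → ℂ be bounded functions, and assume there exist c₁ ∈ ℂ with c₁ ≠ 0 and a natural number n₁ such that c_1(ε) = c₁ ε^{n₁} + O(ε^{n₁+1}) as ε → 0⁺. Fix x ∈ I such that Re Φ_{m,0}(x) < Re Φ_{1,0}(x) for every m = 2,…,d. Then the function ψ(ε) := Σ_{m=1}^d c_m(ε) exp(ε⁻¹ Φ_m(x,ε)) satisfies lim_{ε→0⁺} ε log|ψ(ε)| = Re Φ_{1,0}(x). -/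
/-!
The terms with `m ≠ 1` are smaller than `exp (ε⁻¹ Φ₁(x, ε))` by a factor `exp (-δ/ε)`, which is
flat at `0`, so `ψ(ε) ~ c₁ ε^{n₁} exp (ε⁻¹ Φ₁(x, ε))`. An asymptotic equivalence changes
`ε log |·|` only by `ε log (1 + o(1)) → 0`, and for the model function
`ε log |c₁ ε^{n₁} exp (ε⁻¹ Φ₁(x, ε))| = ε log |c₁| + n₁ ε log ε + Re Φ₁(x, ε) → Re Φ₁(x, 0)`.
-/

open Set Filter Asymptotics Topology

theorem isLittleO_exp_neg_div_pow {δ : ℝ} (hδ : 0 < δ) (n : ℕ) :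
    (fun ε : ℝ => Real.exp (-(δ / ε))) =o[𝓝[>] 0] fun ε => ε ^ n := by
  have h : Tendsto (fun ε : ℝ => (δ / ε) ^ n * Real.exp (-(δ / ε)) / δ ^ n) (𝓝[>] 0) (𝓝 0) := by
    simpa [div_eq_mul_inv] using ((Real.tendsto_pow_mul_exp_neg_atTop_nhds_zero n).comp
      (tendsto_inv_nhdsGT_zero.const_mul_atTop hδ)).div_const (δ ^ n)
  refine (isLittleO_iff_tendsto' ?_).2 (h.congr' ?_)
  all_goals filter_upwards [self_mem_nhdsWithin] with ε (hε : 0 < ε)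
  · exact fun h0 => absurd h0 (pow_ne_zero n hε.ne')
  · rw [div_pow]
    field_simp

theorem isLittleO_cexp_inv_mul_pow {φ : ℝ → ℂ} {z : ℂ} (hφ : Tendsto φ (𝓝[>] 0) (𝓝 z))
    (hz : z.re < 0) (n : ℕ) :
    (fun ε : ℝ => Complex.exp ((ε : ℂ)⁻¹ * φ ε)) =o[𝓝[>] 0] fun ε => (ε : ℂ) ^ n := by
  have hre : ∀ᶠ ε in 𝓝[>] 0, (φ ε).re < z.re / 2 :=
    ((Complex.continuous_re.tendsto z).comp hφ).eventually (gt_mem_nhds (by linarith))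
  refine IsBigO.trans_isLittleO (g := fun ε => Real.exp (-(-z.re / 2 / ε))) ?_ ?_
  · refine IsBigO.of_bound' ?_
    filter_upwards [hre, self_mem_nhdsWithin] with ε hε (hpos : 0 < ε)
    rw [Complex.norm_exp, ← Complex.ofReal_inv, Complex.re_ofReal_mul, Real.norm_of_nonneg
      (Real.exp_nonneg _), Real.exp_le_exp]
    calc ε⁻¹ * (φ ε).re ≤ ε⁻¹ * (z.re / 2) := by gcongr
      _ = _ := by ring
  · exact (isLittleO_exp_neg_div_pow (by linarith) n).trans_isBigO
      (isBigO_of_le _ fun ε => by simp)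

theorem isEquivalent_sum_of_isLittleO {α ι E : Type*} [NormedAddCommGroup E] {l : Filter α}
    {s : Finset ι} {f : ι → α → E} {v : α → E} {i₀ : ι} (hi₀ : i₀ ∈ s) (hf : f i₀ ~[l] v)
    (ho : ∀ i ∈ s, i ≠ i₀ → f i =o[l] v) : (fun x => ∑ i ∈ s, f i x) ~[l] v := by
  classical
  have := hf.add_isLittleO (IsLittleO.fun_sum (s := s.erase i₀) fun i hi =>
    ho i (Finset.mem_of_mem_erase hi) (Finset.ne_of_mem_erase hi))
  refine this.congr_left (Eventually.of_forall fun x => ?_)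
  simp only [Pi.add_apply]
  exact Finset.add_sum_erase s (fun i => f i x) hi₀

theorem isLittleO_mul_cexp_of_re_lt {a φ χ : ℝ → ℂ} {z w c₁ : ℂ} (hc₁ : c₁ ≠ 0) (n : ℕ)
    (ha : a =O[𝓝[>] 0] (1 : ℝ → ℂ)) (hφ : Tendsto φ (𝓝[>] 0) (𝓝 z))
    (hχ : Tendsto χ (𝓝[>] 0) (𝓝 w)) (hzw : z.re < w.re) :
    (fun ε : ℝ => a ε * Complex.exp ((ε : ℂ)⁻¹ * φ ε)) =o[𝓝[>] 0]
      fun ε => c₁ * (ε : ℂ) ^ n * Complex.exp ((ε : ℂ)⁻¹ * χ ε) := by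
  have hdiff := isLittleO_cexp_inv_mul_pow (hφ.sub hχ) (by simpa using hzw) n
  refine ((ha.mul_isLittleO (hdiff.const_mul_right hc₁)).mul_isBigO
    (isBigO_refl (fun ε : ℝ => Complex.exp ((ε : ℂ)⁻¹ * χ ε)) _)).congr (fun ε => ?_) fun ε => ?_
  · simp only [mul_assoc, ← Complex.exp_add]
    ring_nf
  · simp

theorem Asymptotics.IsEquivalent.tendsto_mul_log_norm {𝕜 : Type*} [NormedField 𝕜] {u v : ℝ → 𝕜}
    {L : ℝ} (huv : u ~[𝓝[>] 0] v) (hv : ∀ᶠ ε in 𝓝[>] 0, v ε ≠ 0)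
    (h : Tendsto (fun ε => ε * Real.log ‖v ε‖) (𝓝[>] 0) (𝓝 L)) :
    Tendsto (fun ε => ε * Real.log ‖u ε‖) (𝓝[>] 0) (𝓝 L) := by
  have hratio : Tendsto (u / v) (𝓝[>] 0) (𝓝 1) := (isEquivalent_iff_tendsto_one hv).1 huv
  have hlog : Tendsto (fun ε => ε * Real.log ‖(u / v) ε‖) (𝓝[>] 0) (𝓝 0) := by
    simpa using (tendsto_id.mono_left nhdsWithin_le_nhds).mul (hratio.norm.log (by simp))
  refine (hlog.add h).congr' ?_ |>.trans (by rw [zero_add])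
  filter_upwards [hv, hratio.eventually_ne one_ne_zero] with ε hvε hr
  rw [Pi.div_apply, norm_div, Real.log_div (norm_ne_zero_iff.2 (div_ne_zero_iff.1 hr).1)
    (norm_ne_zero_iff.2 hvε)]
  ring

theorem tendsto_mul_log_norm_const_mul_pow_mul_cexp {c₁ : ℂ} (hc₁ : c₁ ≠ 0) (n : ℕ) {φ : ℝ → ℂ}
    {z : ℂ} (hφ : Tendsto φ (𝓝[>] 0) (𝓝 z)) :
    Tendsto (fun ε : ℝ => ε * Real.log ‖c₁ * (ε : ℂ) ^ n * Complex.exp ((ε : ℂ)⁻¹ * φ ε)‖)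
      (𝓝[>] 0) (𝓝 z.re) := by
  have hε : Tendsto (fun ε : ℝ => ε) (𝓝[>] 0) (𝓝 0) := tendsto_id.mono_left nhdsWithin_le_nhds
  have hεlog : Tendsto (fun ε : ℝ => ε * Real.log ε) (𝓝[>] 0) (𝓝 0) := by
    simpa using Real.continuous_mul_log.continuousAt.tendsto.mono_left
      (nhdsWithin_le_nhds (a := (0 : ℝ)))
  have hlim := ((hε.mul_const (Real.log ‖c₁‖)).add (hεlog.const_mul (n : ℝ))).add
    ((Complex.continuous_re.tendsto z).comp hφ)
  simp only [zero_mul, mul_zero, zero_add, Function.comp_def] at hlim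
  refine hlim.congr' ?_
  filter_upwards [self_mem_nhdsWithin] with ε (hpos : 0 < ε)
  rw [norm_mul, norm_mul, Complex.norm_exp, norm_pow, Complex.norm_real,
    Real.norm_of_nonneg hpos.le, Real.log_mul (by positivity) (Real.exp_ne_zero _),
    Real.log_mul (norm_ne_zero_iff.2 hc₁) (by positivity), Real.log_exp, Real.log_pow,
    ← Complex.ofReal_inv, Complex.re_ofReal_mul]
  field_simp

theorem isEquivalent_const_mul_pow_of_norm_sub_le {f : ℝ → ℂ} {c₁ : ℂ} (hc₁ : c₁ ≠ 0) {n : ℕ}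
    {ε' C : ℝ} (hε' : 0 < ε')
    (h : ∀ ε ∈ Ioc (0 : ℝ) ε', ‖f ε - c₁ * (ε : ℂ) ^ n‖ ≤ C * ε ^ (n + 1)) :
    f ~[𝓝[>] 0] fun ε => c₁ * (ε : ℂ) ^ n := by
  have hbig : (fun ε => f ε - c₁ * (ε : ℂ) ^ n) =O[𝓝[>] 0] fun ε : ℝ => (ε : ℂ) ^ (n + 1) := by
    refine IsBigO.of_bound C ?_
    filter_upwards [Ioc_mem_nhdsGT hε'] with ε hε
    simpa [abs_of_pos hε.1] using h ε hε
  have hpow : (fun ε : ℝ => (ε : ℂ) ^ (n + 1)) =o[𝓝[>] 0] fun ε : ℝ => (ε : ℂ) ^ n :=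
    ((isLittleO_pow_pow (Nat.lt_succ_self n)).comp_tendsto
      (Complex.continuous_ofReal.tendsto' 0 0 Complex.ofReal_zero)).mono nhdsWithin_le_nhds
  exact (hbig.trans_isLittleO hpow).const_mul_right hc₁

theorem stmt_0_general (a b : ℝ) (ε' : ℝ) (hε' : 0 < ε') (d : ℕ) (hd : 1 ≤ d)
    (Φ : Fin d → ℝ → ℝ → ℂ)
    (hΦcont : ∀ m : Fin d,
      ContinuousOn (fun p : ℝ × ℝ => Φ m p.1 p.2) (Icc a b ×ˢ Icc 0 ε'))
    (c : Fin d → ℝ → ℂ)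
    (hcbdd : ∃ B : ℝ, ∀ m : Fin d, ∀ ε ∈ Icc (0:ℝ) ε', ‖c m ε‖ ≤ B)
    (c₁ : ℂ) (hc₁ : c₁ ≠ 0) (n₁ : ℕ)
    (hc : ∃ C : ℝ, ∀ ε ∈ Ioc (0:ℝ) ε', ‖c ⟨0, hd⟩ ε - c₁ * (ε:ℂ) ^ n₁‖ ≤ C * ε ^ (n₁ + 1))
    (x : ℝ) (hx : x ∈ Icc a b)
    (hdom : ∀ m : Fin d, m ≠ ⟨0, hd⟩ → (Φ m x 0).re < (Φ ⟨0, hd⟩ x 0).re) :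
    Tendsto
      (fun ε : ℝ =>
        ε * Real.log ‖∑ m : Fin d, c m ε * Complex.exp ((ε:ℂ)⁻¹ * Φ m x ε)‖)
      (nhdsWithin 0 (Ioi 0)) (nhds ((Φ ⟨0, hd⟩ x 0).re)) := by
  have hΦ : ∀ m, Tendsto (fun ε => Φ m x ε) (𝓝[>] 0) (𝓝 (Φ m x 0)) := by
    intro m
    have hcont : ContinuousOn (fun ε => Φ m x ε) (Icc 0 ε') :=
      (hΦcont m).comp (continuous_const.prodMk continuous_id).continuousOn fun ε hε => ⟨hx, hε⟩
    rw [← nhdsWithin_Ioc_eq_nhdsGT hε']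
    exact ((hcont 0 ⟨le_rfl, hε'.le⟩).mono Ioc_subset_Icc_self).tendsto
  have hbdd : ∀ m, c m =O[𝓝[>] 0] (1 : ℝ → ℂ) := by
    obtain ⟨B, hB⟩ := hcbdd
    refine fun m => IsBigO.of_bound B ?_
    filter_upwards [Ioc_mem_nhdsGT hε'] with ε hε
    simpa using hB m ε (Ioc_subset_Icc_self hε)
  obtain ⟨C, hC⟩ := hc
  have hlead := isEquivalent_const_mul_pow_of_norm_sub_le hc₁ hε' hC
  refine IsEquivalent.tendsto_mul_log_norm ?_ ?_
    (tendsto_mul_log_norm_const_mul_pow_mul_cexp hc₁ n₁ (hΦ _))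
  · exact isEquivalent_sum_of_isLittleO (Finset.mem_univ _) (hlead.mul IsEquivalent.refl)
      fun m _ hm => isLittleO_mul_cexp_of_re_lt hc₁ n₁ (hbdd m) (hΦ m) (hΦ _) (hdom m hm)
  · filter_upwards [self_mem_nhdsWithin] with ε (hε : 0 < ε)
    exact mul_ne_zero (mul_ne_zero hc₁ (pow_ne_zero _ (by exact_mod_cast hε.ne')))
      (Complex.exp_ne_zero _)

/-- If `ψ(ε) = Σ_m c_m(ε) exp(ε⁻¹Φ_m(x,ε))`, where `Φ_m(x,ε) = Φ_m(x,0) + O(ε)` uniformly,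
the `c_m` are bounded, `c_1(ε) = c₁ε^{n₁} + O(ε^{n₁+1})` with `c₁ ≠ 0`, and
`Re Φ_m(x,0) < Re Φ_1(x,0)` for all `m ≠ 1`, then `ε log|ψ(ε)| → Re Φ_1(x,0)` as `ε → 0⁺`. -/
theorem stmt_0 (a b : ℝ) (hab : a ≤ b) (ε' : ℝ) (hε' : 0 < ε') (d : ℕ) (hd : 1 ≤ d)
    (Φ : Fin d → ℝ → ℝ → ℂ)
    (hΦcont : ∀ m : Fin d,
      ContinuousOn (fun p : ℝ × ℝ => Φ m p.1 p.2) (Icc a b ×ˢ Icc 0 ε'))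
    (hΦO : ∃ C : ℝ, ∀ m : Fin d, ∀ x ∈ Icc a b, ∀ ε ∈ Ioc (0:ℝ) ε',
      ‖Φ m x ε - Φ m x 0‖ ≤ C * ε)
    (c : Fin d → ℝ → ℂ)
    (hcbdd : ∃ B : ℝ, ∀ m : Fin d, ∀ ε ∈ Icc (0:ℝ) ε', ‖c m ε‖ ≤ B)
    (c₁ : ℂ) (hc₁ : c₁ ≠ 0) (n₁ : ℕ)
    (hc : ∃ C : ℝ, ∀ ε ∈ Ioc (0:ℝ) ε', ‖c ⟨0, hd⟩ ε - c₁ * (ε:ℂ) ^ n₁‖ ≤ C * ε ^ (n₁ + 1))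
    (x : ℝ) (hx : x ∈ Icc a b)
    (hdom : ∀ m : Fin d, m ≠ ⟨0, hd⟩ → (Φ m x 0).re < (Φ ⟨0, hd⟩ x 0).re) :
    Tendsto
      (fun ε : ℝ =>
        ε * Real.log ‖∑ m : Fin d, c m ε * Complex.exp ((ε:ℂ)⁻¹ * Φ m x ε)‖)
      (nhdsWithin 0 (Ioi 0)) (nhds ((Φ ⟨0, hd⟩ x 0).re)) :=
  stmt_0_general a b ε' hε' d hd Φ hΦcont c hcbdd c₁ hc₁ n₁ hc x hx hdom
end

section
/- Let I = [0,b] with b > 0, ε₀ > 0, and let a_0, a_1 : I × [0,ε₀] → ℂ be continuous functions with a_0(x,0) ≠ 0 and a_1(x,0) ≠ 0 for all x ∈ I. Then there exists ε' ∈ (0,ε₀] such that a_0 and a_1 are nonvanishing on I × [0,ε'], and for ε ∈ (0,ε'] and k ∈ ℕ with kε ∈ I the unique solution φ of the first-order ε-difference equation a_0(kε,ε) φ(kε,ε) + a_1(kε,ε) φ((k+1)ε,ε) = 0 with φ(0,ε) = 1, namely φ(kε,ε) = ∏_{j=0}^{k−1} (−a_0(jε,ε)/a_1(jε,ε)), satisfies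 for every fixed x ∈ (0,b]: lim_{ε→0⁺} ε log|φ(⌊x/ε⌋ε, ε)| = ∫₀ˣ log|a_0(t,0)/a_1(t,0)| dt. -/
/-!
Once `a₀` and `a₁` have no zeros on `[0,b] × [0,ε']` (tube lemma), `ε log |φ(⌊x/ε⌋ε, ε)|` is the
Riemann sum `ε ∑_{j < ⌊x/ε⌋} h(jε, ε)` of the continuous function `h = log |a₀/a₁|`. Uniform
continuity of `h` on the compact rectangle makes `ε h(jε, ε)` differ from `∫_{jε}^{(j+1)ε} h(t, 0)`
by `o(ε)` uniformly in `j`, and `⌊x/ε⌋ε → x` takes care of the remaining piece of `[0, x]`.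
-/

open Set Filter Topology MeasureTheory

theorem exists_pos_forall_ne_zero_of_continuousOn {X E : Type*} [TopologicalSpace X]
    [TopologicalSpace E] [T1Space E] [Zero E] {K : Set X} (hK : IsCompact K) {ε₀ : ℝ}
    (hε₀ : 0 < ε₀) {f : X → ℝ → E}
    (hf : ContinuousOn (fun p : X × ℝ => f p.1 p.2) (K ×ˢ Icc 0 ε₀))
    (hf₀ : ∀ x ∈ K, f x 0 ≠ 0) :
    ∃ ε' ∈ Ioc 0 ε₀, ∀ x ∈ K, ∀ ε ∈ Icc 0 ε', f x ε ≠ 0 := by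
  have hnear : ∀ᶠ ε in 𝓝 (0 : ℝ), ∀ x ∈ K, (x, ε) ∈ K ×ˢ Icc 0 ε₀ → f x ε ≠ 0 := by
    refine hK.eventually_forall_of_forall_eventually fun x hx => ?_
    have hwithin : ∀ᶠ p in 𝓝[K ×ˢ Icc 0 ε₀] (x, 0), f p.1 p.2 ≠ 0 :=
      (hf (x, 0) ⟨hx, left_mem_Icc.2 hε₀.le⟩).eventually_ne (hf₀ x hx)
    exact (continuous_swap.tendsto (0, x)).eventually (eventually_nhdsWithin_iff.1 hwithin)
  obtain ⟨δ, hδ, hball⟩ := Metric.eventually_nhds_iff.1 hnear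
  refine ⟨min ε₀ (δ / 2), ⟨by positivity, min_le_left _ _⟩, fun x hx ε hε => ?_⟩
  have hεδ : ε < δ := by linarith [hε.2.trans (min_le_right _ _)]
  refine hball ?_ x hx ⟨hx, hε.1, hε.2.trans (min_le_left _ _)⟩
  rwa [Real.dist_eq, sub_zero, abs_of_nonneg hε.1]

theorem natCast_floor_div_mul_le {x ε : ℝ} (hx : 0 ≤ x) (hε : 0 < ε) :
    (⌊x / ε⌋₊ : ℝ) * ε ≤ x :=
  (le_div_iff₀ hε).1 (Nat.floor_le (div_nonneg hx hε.le))

theorem sub_lt_natCast_floor_div_mul {x ε : ℝ} (hε : 0 < ε) : x - ε < (⌊x / ε⌋₊ : ℝ) * ε := by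
  have := (div_lt_iff₀ hε).1 (Nat.lt_floor_add_one (x / ε))
  linarith

theorem tendsto_natCast_floor_div_mul {x : ℝ} (hx : 0 ≤ x) :
    Tendsto (fun ε : ℝ => (⌊x / ε⌋₊ : ℝ) * ε) (𝓝[>] 0) (𝓝[Icc 0 x] x) := by
  refine tendsto_nhdsWithin_iff.2 ⟨?_, ?_⟩
  · have hlow : Tendsto (fun ε : ℝ => x - ε) (𝓝[>] 0) (𝓝 x) :=
      ((continuous_sub_left x).tendsto' 0 x (sub_zero x)).mono_left nhdsWithin_le_nhds
    exact tendsto_of_tendsto_of_tendsto_of_le_of_le' hlow tendsto_const_nhds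
      (eventually_mem_nhdsWithin.mono fun ε hε => (sub_lt_natCast_floor_div_mul hε).le)
      (eventually_mem_nhdsWithin.mono fun ε hε => natCast_floor_div_mul_le hx hε)
  · filter_upwards [self_mem_nhdsWithin] with ε hε
    exact ⟨mul_nonneg (Nat.cast_nonneg _) (le_of_lt hε), natCast_floor_div_mul_le hx hε⟩

section RiemannSum

variable {E : Type*} [NormedAddCommGroup E] [NormedSpace ℝ E] [CompleteSpace E]

theorem norm_smul_sum_sub_integral_le {g : ℝ → E} {c : ℕ → E} {ε δ : ℝ} {k : ℕ} (hε : 0 ≤ ε)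
    (hg : ∀ j < k, IntervalIntegrable g volume (j * ε) ((j + 1) * ε))
    (hc : ∀ j < k, ∀ t ∈ Icc (j * ε) ((j + 1) * ε), ‖c j - g t‖ ≤ δ) :
    ‖ε • ∑ j ∈ Finset.range k, c j - ∫ t in (0 : ℝ)..k * ε, g t‖ ≤ k * ε * δ := by
  have hsplit := intervalIntegral.sum_integral_adjacent_intervals (a := fun j : ℕ => j * ε)
    (f := g) (μ := volume) (n := k) (by exact_mod_cast hg)
  simp only [Nat.cast_zero, zero_mul] at hsplit
  have hpiece : ∀ j ∈ Finset.range k,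
      ‖ε • c j - ∫ t in (j : ℝ) * ε..((j + 1 : ℕ) : ℝ) * ε, g t‖ ≤ δ * ε := by
    intro j hj
    have hj := Finset.mem_range.1 hj
    have hconst : ε • c j = ∫ _ in (j : ℝ) * ε..((j + 1 : ℕ) : ℝ) * ε, c j := by
      rw [intervalIntegral.integral_const]; push_cast; ring_nf
    rw [hconst, ← intervalIntegral.integral_sub intervalIntegrable_const (by exact_mod_cast hg j hj)]
    refine (intervalIntegral.norm_integral_le_of_norm_le_const (C := δ) fun t ht => ?_).trans_eq ?_
    · rw [uIoc_of_le (by push_cast; nlinarith)] at ht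
      exact hc j hj t (by exact_mod_cast Ioc_subset_Icc_self ht)
    · push_cast; rw [show ((j : ℝ) + 1) * ε - j * ε = ε by ring, abs_of_nonneg hε]
  rw [← hsplit, Finset.smul_sum, ← Finset.sum_sub_distrib]
  refine (norm_sum_le _ _).trans ((Finset.sum_le_sum hpiece).trans_eq ?_)
  rw [Finset.sum_const, Finset.card_range, nsmul_eq_mul]; ring

theorem tendsto_smul_sum_sub_integral_floor_div {b ε₀ x : ℝ} {h : ℝ × ℝ → E}
    (hh : ContinuousOn h (Icc 0 b ×ˢ Icc 0 ε₀)) (hε₀ : 0 < ε₀) (hx : x ∈ Icc 0 b) :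
    Tendsto (fun ε : ℝ => ε • ∑ j ∈ Finset.range ⌊x / ε⌋₊, h (j * ε, ε) -
      ∫ t in (0 : ℝ)..⌊x / ε⌋₊ * ε, h (t, 0)) (𝓝[>] 0) (𝓝 0) := by
  have hb : 0 ≤ b := hx.1.trans hx.2
  have huc := Metric.uniformContinuousOn_iff.1
    ((isCompact_Icc.prod isCompact_Icc).uniformContinuousOn_of_continuous hh)
  have hg : ContinuousOn (fun t => h (t, 0)) (Icc 0 b) :=
    hh.comp (continuous_id.prodMk continuous_const).continuousOn
      fun t ht => ⟨ht, left_mem_Icc.2 hε₀.le⟩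
  refine Metric.tendsto_nhds.2 fun δ hδ => ?_
  obtain ⟨η, hη, hclose⟩ := huc (δ / (b + 1)) (by positivity)
  filter_upwards [Ioo_mem_nhdsGT (lt_min hη hε₀)] with ε ⟨hε, hεmin⟩
  have hεη : ε < η := hεmin.trans_le (min_le_left _ _)
  set k := ⌊x / ε⌋₊
  have hkb : (k : ℝ) * ε ≤ b := (natCast_floor_div_mul_le hx.1 hε).trans hx.2
  have hjb : ∀ j < k, ((j : ℝ) + 1) * ε ≤ b := fun j hj =>
    le_trans (by gcongr; exact_mod_cast Nat.succ_le_of_lt hj) hkb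
  have hgj : ∀ j < k, IntervalIntegrable (fun t => h (t, 0)) volume (j * ε) ((j + 1) * ε) :=
    fun j hj => (hg.mono (Icc_subset_Icc (by positivity) (hjb j hj))).intervalIntegrable_of_Icc
      (by gcongr; linarith)
  have hcj : ∀ j < k, ∀ t ∈ Icc ((j : ℝ) * ε) ((j + 1) * ε),
      ‖h (j * ε, ε) - h (t, 0)‖ ≤ δ / (b + 1) := by
    intro j hj t ht
    have hjt : dist ((j : ℝ) * ε, ε) (t, 0) < η := by
      rw [Prod.dist_eq, Real.dist_eq, Real.dist_eq, sub_zero, abs_of_pos hε]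
      refine max_lt ?_ hεη
      rw [abs_lt]
      constructor <;> nlinarith [ht.1, ht.2]
    rw [← dist_eq_norm]
    refine (hclose _ ⟨⟨by positivity, by nlinarith [hjb j hj]⟩, hε.le,
      hεmin.le.trans (min_le_right _ _)⟩ _
      ⟨⟨by nlinarith [ht.1], ht.2.trans (hjb j hj)⟩, left_mem_Icc.2 hε₀.le⟩ hjt).le
  rw [dist_zero_right]
  calc _ ≤ k * ε * (δ / (b + 1)) := norm_smul_sum_sub_integral_le hε.le hgj hcj
    _ ≤ b * (δ / (b + 1)) := by gcongr
    _ < δ := by rw [mul_div_assoc', div_lt_iff₀ (by positivity)]; nlinarith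

theorem tendsto_smul_sum_floor_div {b ε₀ x : ℝ} {h : ℝ × ℝ → E}
    (hh : ContinuousOn h (Icc 0 b ×ˢ Icc 0 ε₀)) (hε₀ : 0 < ε₀) (hx : x ∈ Icc 0 b) :
    Tendsto (fun ε : ℝ => ε • ∑ j ∈ Finset.range ⌊x / ε⌋₊, h (j * ε, ε)) (𝓝[>] 0)
      (𝓝 (∫ t in (0 : ℝ)..x, h (t, 0))) := by
  have hg : ContinuousOn (fun t => h (t, 0)) (uIcc 0 x) :=
    hh.comp (continuous_id.prodMk continuous_const).continuousOn
      fun t ht => ⟨Icc_subset_Icc le_rfl hx.2 (uIcc_of_le hx.1 ▸ ht), left_mem_Icc.2 hε₀.le⟩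
  have hprimitive : Tendsto (fun ε : ℝ => ∫ t in (0 : ℝ)..⌊x / ε⌋₊ * ε, h (t, 0)) (𝓝[>] 0)
      (𝓝 (∫ t in (0 : ℝ)..x, h (t, 0))) := by
    have hcont := intervalIntegral.continuousOn_primitive_interval (μ := volume)
      (hg.integrableOn_compact isCompact_uIcc) x right_mem_uIcc
    rw [uIcc_of_le hx.1] at hcont
    exact hcont.tendsto.comp (tendsto_natCast_floor_div_mul hx.1)
  simpa using (tendsto_smul_sum_sub_integral_floor_div hh hε₀ hx).add hprimitive

end RiemannSum

theorem stmt_2_general (b : ℝ) (ε₀ : ℝ) (hε₀ : 0 < ε₀)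
    (a₀ a₁ : ℝ → ℝ → ℂ)
    (ha₀c : ContinuousOn (fun p : ℝ × ℝ => a₀ p.1 p.2) (Icc 0 b ×ˢ Icc 0 ε₀))
    (ha₁c : ContinuousOn (fun p : ℝ × ℝ => a₁ p.1 p.2) (Icc 0 b ×ˢ Icc 0 ε₀))
    (ha₀ : ∀ x ∈ Icc 0 b, a₀ x 0 ≠ 0) (ha₁ : ∀ x ∈ Icc 0 b, a₁ x 0 ≠ 0) :
    ∃ ε' ∈ Ioc (0:ℝ) ε₀,
      (∀ x ∈ Icc 0 b, ∀ ε ∈ Icc (0:ℝ) ε', a₀ x ε ≠ 0 ∧ a₁ x ε ≠ 0) ∧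
      ∀ x ∈ Ioc (0:ℝ) b,
        Tendsto
          (fun ε : ℝ =>
            ε * Real.log
              ‖∏ j ∈ Finset.range ⌊x / ε⌋₊, (-(a₀ (j * ε) ε) / a₁ (j * ε) ε)‖)
          (nhdsWithin 0 (Ioi 0))
          (nhds (∫ t in (0:ℝ)..x, Real.log ‖a₀ t 0 / a₁ t 0‖)) := by
  obtain ⟨ε₁, hε₁, hne₀⟩ := exists_pos_forall_ne_zero_of_continuousOn isCompact_Icc hε₀ ha₀c ha₀
  obtain ⟨ε₂, hε₂, hne₁⟩ := exists_pos_forall_ne_zero_of_continuousOn isCompact_Icc hε₀ ha₁c ha₁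
  set ε' := min ε₁ ε₂
  have hε' : 0 < ε' := lt_min hε₁.1 hε₂.1
  have hne : ∀ x ∈ Icc 0 b, ∀ ε ∈ Icc (0:ℝ) ε', a₀ x ε ≠ 0 ∧ a₁ x ε ≠ 0 := fun x hx ε hε =>
    ⟨hne₀ x hx ε ⟨hε.1, hε.2.trans (min_le_left _ _)⟩,
      hne₁ x hx ε ⟨hε.1, hε.2.trans (min_le_right _ _)⟩⟩
  refine ⟨ε', ⟨hε', (min_le_left _ _).trans hε₁.2⟩, hne, fun x hx => ?_⟩
  have hsub : Icc 0 b ×ˢ Icc 0 ε' ⊆ Icc 0 b ×ˢ Icc 0 ε₀ :=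
    prod_mono_right (Icc_subset_Icc le_rfl ((min_le_left _ _).trans hε₁.2))
  have hlog : ContinuousOn (fun p : ℝ × ℝ => Real.log ‖a₀ p.1 p.2 / a₁ p.1 p.2‖)
      (Icc 0 b ×ˢ Icc 0 ε') :=
    ((ha₀c.mono hsub).div (ha₁c.mono hsub) fun p hp => (hne _ hp.1 _ hp.2).2).norm.log
      fun p hp => by simp [hne _ hp.1 _ hp.2]
  refine (tendsto_smul_sum_floor_div hlog hε' (Ioc_subset_Icc_self hx)).congr' ?_
  filter_upwards [Ioo_mem_nhdsGT hε'] with ε ⟨hε, hεε'⟩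
  have hmem : ∀ j ∈ Finset.range ⌊x / ε⌋₊, (j : ℝ) * ε ∈ Icc 0 b := fun j hj =>
    ⟨by positivity, le_trans (by gcongr; exact_mod_cast (Finset.mem_range.1 hj).le)
      ((natCast_floor_div_mul_le hx.1.le hε).trans hx.2)⟩
  have hnej : ∀ j ∈ Finset.range ⌊x / ε⌋₊, a₀ (j * ε) ε ≠ 0 ∧ a₁ (j * ε) ε ≠ 0 :=
    fun j hj => hne _ (hmem j hj) ε ⟨hε.le, hεε'.le⟩
  rw [smul_eq_mul, norm_prod, Real.log_prod fun j hj => by simp [hnej j hj]]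
  simp only [neg_div, norm_neg]

/-- For a regular first-order ε-difference equation
`a_0(kε,ε)φ(kε,ε) + a_1(kε,ε)φ((k+1)ε,ε) = 0` with `φ(0,ε)=1`, whose explicit solution is
`φ(kε,ε) = ∏_{j<k}(−a_0(jε,ε)/a_1(jε,ε))`, the growth rate of the solution is
`lim_{ε→0⁺} ε log|φ(⌊x/ε⌋ε,ε)| = ∫₀ˣ log|a_0(t,0)/a_1(t,0)| dt` for each `x ∈ (0,b]`. -/
theorem stmt_2 (b : ℝ) (hb : 0 < b) (ε₀ : ℝ) (hε₀ : 0 < ε₀)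
    (a₀ a₁ : ℝ → ℝ → ℂ)
    (ha₀c : ContinuousOn (fun p : ℝ × ℝ => a₀ p.1 p.2) (Icc 0 b ×ˢ Icc 0 ε₀))
    (ha₁c : ContinuousOn (fun p : ℝ × ℝ => a₁ p.1 p.2) (Icc 0 b ×ˢ Icc 0 ε₀))
    (ha₀ : ∀ x ∈ Icc 0 b, a₀ x 0 ≠ 0) (ha₁ : ∀ x ∈ Icc 0 b, a₁ x 0 ≠ 0) :
    ∃ ε' ∈ Ioc (0:ℝ) ε₀,
      (∀ x ∈ Icc 0 b, ∀ ε ∈ Icc (0:ℝ) ε', a₀ x ε ≠ 0 ∧ a₁ x ε ≠ 0) ∧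
      ∀ x ∈ Ioc (0:ℝ) b,
        Tendsto
          (fun ε : ℝ =>
            ε * Real.log
              ‖∏ j ∈ Finset.range ⌊x / ε⌋₊, (-(a₀ (j * ε) ε) / a₁ (j * ε) ε)‖)
          (nhdsWithin 0 (Ioi 0))
          (nhds (∫ t in (0:ℝ)..x, Real.log ‖a₀ t 0 / a₁ t 0‖)) :=
  stmt_2_general b ε₀ hε₀ a₀ a₁ ha₀c ha₁c ha₀ ha₁
end

section
/- Let d ≥ 1, K ≥ 0, δ > 0, and let λ_1,…,λ_d : [a,b] → ℂ be functions, each Lipschitz with constant K, such that |λ_i(x) − λ_j(x)| ≥ δ for all i ≠ j and all x ∈ [a,b]. For x ∈ [a,b] let M(x) be the d × d Vandermonde matrix with entries M(x)_{ij} = λ_j(x)^{i−1}. Then there exists a constant C ≥ 0, depending only on d, K, δ, and sup_{x,j} |λ_j(x)|, such that for all x, y ∈ [a,b]: ‖M(x)⁻¹ M(y) − I‖ ≤ C |x − y|, and consequently ‖M(x)⁻¹ M(y)‖ ≤ 1 + C |x − y| in operator norm. -/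
/-!
Write `M(x)⁻¹ M(y) - 1 = M(x)⁻¹ (M(y) - M(x))` and bound the two factors separately.
By Cramer's rule `M(x)⁻¹ = (det M(x))⁻¹ • adj M(x)`; the Vandermonde determinant
`∏_{i<j} (λ_j - λ_i)` is at least `δ ^ (d choose 2)` in modulus, and every adjugate entry is a
determinant of a matrix with entries of modulus at most `E ^ d`, `E = max 1 B`. The entries
`λ_j(y)^i - λ_j(x)^i` of `M(y) - M(x)` are at most `d E^d K |x - y|`, since `z ↦ z^i` is
`i E^(i-1)`-Lipschitz on the disc of radius `E`. Finally the operator norm of a matrix is at most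
the sum of the moduli of its entries.
-/

open Set Finset Matrix
open scoped Matrix.Norms.L2Operator Nat

theorem Fin.sum_card_Ioi (d : ℕ) : ∑ i : Fin d, #(Ioi i) = d.choose 2 := by
  simp only [Fin.card_Ioi]
  rw [Fin.sum_univ_eq_sum_range (fun i => d - 1 - i), sum_range_reflect (fun i => i) d,
    sum_range_id, Nat.choose_two_right]

theorem norm_pow_sub_pow_le {𝕜 : Type*} [NormedField 𝕜] {x y : 𝕜} {E : ℝ} (hx : ‖x‖ ≤ E)
    (hy : ‖y‖ ≤ E) (n : ℕ) : ‖x ^ n - y ^ n‖ ≤ n * E ^ (n - 1) * ‖x - y‖ := by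
  have hE : 0 ≤ E := (norm_nonneg x).trans hx
  rw [← geom_sum₂_mul, norm_mul]
  gcongr
  calc ‖∑ i ∈ range n, x ^ i * y ^ (n - 1 - i)‖
      ≤ ∑ i ∈ range n, ‖x‖ ^ i * ‖y‖ ^ (n - 1 - i) := by
        simpa only [norm_mul, norm_pow] using norm_sum_le (range n) fun i => x ^ i * y ^ (n - 1 - i)
    _ ≤ ∑ i ∈ range n, E ^ i * E ^ (n - 1 - i) := by gcongr
    _ = ∑ _i ∈ range n, E ^ (n - 1) :=
        sum_congr rfl fun i hi => by rw [← pow_add, Nat.add_sub_cancel' (by simp at hi; omega)]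
    _ = n * E ^ (n - 1) := by simp

namespace Matrix

section L2OpNorm

variable {𝕜 m n : Type*} [RCLike 𝕜] [Fintype m] [Fintype n] [DecidableEq m] [DecidableEq n]

theorem l2_opNorm_single (i : m) (j : n) (a : 𝕜) : ‖single i j a‖ = ‖a‖ := by
  have hsq : (single i j a)ᴴ * single i j a = diagonal (Pi.single j (star a * a)) := by
    rw [conjTranspose_single, single_mul_single_same, ← diagonal_single]
  have h := l2_opNorm_conjTranspose_mul_self (single i j a)
  rw [hsq, l2_opNorm_diagonal, Pi.norm_single, norm_mul, norm_star] at h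
  nlinarith [norm_nonneg (single i j a), norm_nonneg a]

theorem l2_opNorm_le_sum_norm_apply (A : Matrix m n 𝕜) : ‖A‖ ≤ ∑ i, ∑ j, ‖A i j‖ := by
  conv_lhs => rw [matrix_eq_sum_single A]
  refine (norm_sum_le _ _).trans (sum_le_sum fun i _ => ?_)
  refine (norm_sum_le _ _).trans (sum_le_sum fun j _ => ?_)
  rw [l2_opNorm_single]

theorem l2_opNorm_le_of_norm_apply_le (A : Matrix m n 𝕜) {c : ℝ} (h : ∀ i j, ‖A i j‖ ≤ c) :
    ‖A‖ ≤ Fintype.card m * Fintype.card n * c := by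
  refine (l2_opNorm_le_sum_norm_apply A).trans ?_
  calc ∑ i, ∑ j, ‖A i j‖ ≤ ∑ _i : m, ∑ _j : n, c := by gcongr; exact h _ _
    _ = _ := by simp [mul_assoc]

theorem l2_opNorm_one_le : ‖(1 : Matrix n n 𝕜)‖ ≤ 1 := by
  cases isEmpty_or_nonempty n
  · simp [Subsingleton.elim (1 : Matrix n n 𝕜) 0]
  · exact CStarRing.norm_one.le

end L2OpNorm

section Adjugate

variable {𝕜 n : Type*} [Fintype n] [DecidableEq n]

theorem norm_det_le [NormedField 𝕜] (A : Matrix n n 𝕜) {c : ℝ} (h : ∀ i j, ‖A i j‖ ≤ c) :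
    ‖A.det‖ ≤ (Fintype.card n)! * c ^ Fintype.card n := by
  simpa using det_le (abv := IsAbsoluteValue.toAbsoluteValue (norm : 𝕜 → ℝ)) h

theorem norm_adjugate_apply_le [NormedField 𝕜] (A : Matrix n n 𝕜) {c : ℝ} (hc : 1 ≤ c)
    (h : ∀ i j, ‖A i j‖ ≤ c) (i j : n) :
    ‖A.adjugate i j‖ ≤ (Fintype.card n)! * c ^ Fintype.card n := by
  rw [adjugate_apply]
  refine norm_det_le _ fun p q => ?_
  rw [updateRow_apply]
  split_ifs
  · rw [Pi.single_apply]
    split_ifs <;> simp [hc, zero_le_one.trans hc]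
  · exact h p q

theorem l2_opNorm_inv_le [RCLike 𝕜] (A : Matrix n n 𝕜) {c t : ℝ} (hc : 1 ≤ c)
    (h : ∀ i j, ‖A i j‖ ≤ c) (ht : 0 < t) (hdet : t ≤ ‖A.det‖) :
    ‖A⁻¹‖ ≤ t⁻¹ * (Fintype.card n * Fintype.card n * ((Fintype.card n)! * c ^ Fintype.card n)) := by
  rw [inv_def, norm_smul, Ring.inverse_eq_inv', norm_inv]
  gcongr
  exact l2_opNorm_le_of_norm_apply_le _ (norm_adjugate_apply_le A hc h)

end Adjugate

section Vandermonde

theorem pow_choose_two_le_norm_det_vandermonde {𝕜 : Type*} [NormedField 𝕜] {d : ℕ}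
    (v : Fin d → 𝕜) {δ : ℝ} (hδ : 0 ≤ δ) (hsep : ∀ i j, i ≠ j → δ ≤ ‖v i - v j‖) :
    δ ^ d.choose 2 ≤ ‖(vandermonde v).det‖ := by
  rw [det_vandermonde, norm_prod, ← Fin.sum_card_Ioi, ← prod_pow_eq_pow_sum]
  refine prod_le_prod (fun _ _ => by positivity) fun i _ => ?_
  rw [norm_prod, ← prod_const]
  exact prod_le_prod (fun _ _ => hδ) fun j hj => hsep j i (ne_of_gt (mem_Ioi.mp hj))

variable {𝕜 : Type*} [RCLike 𝕜] {d : ℕ} {v w : Fin d → 𝕜} {δ E ε : ℝ}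

theorem norm_vandermonde_apply_le (hE : 1 ≤ E) (hv : ∀ j, ‖v j‖ ≤ E) (i j : Fin d) :
    ‖vandermonde v i j‖ ≤ E ^ d := by
  rw [vandermonde_apply, norm_pow]
  calc ‖v i‖ ^ (j : ℕ) ≤ E ^ (j : ℕ) := by gcongr; exact hv i
    _ ≤ E ^ d := pow_le_pow_right₀ hE j.is_lt.le

theorem l2_opNorm_inv_vandermonde_transpose_le (hδ : 0 < δ)
    (hsep : ∀ i j, i ≠ j → δ ≤ ‖v i - v j‖) (hE : 1 ≤ E) (hv : ∀ j, ‖v j‖ ≤ E) :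
    ‖(vandermonde v)ᵀ⁻¹‖ ≤ (δ ^ d.choose 2)⁻¹ * (d * d * (d ! * (E ^ d) ^ d)) := by
  simpa using l2_opNorm_inv_le (vandermonde v)ᵀ (one_le_pow₀ hE)
    (fun i j => norm_vandermonde_apply_le hE hv j i) (by positivity)
    ((pow_choose_two_le_norm_det_vandermonde v hδ.le hsep).trans_eq (by rw [det_transpose]))

theorem l2_opNorm_vandermonde_transpose_sub_le (hE : 1 ≤ E) (hv : ∀ j, ‖v j‖ ≤ E)
    (hw : ∀ j, ‖w j‖ ≤ E) (hvw : ∀ j, ‖v j - w j‖ ≤ ε) :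
    ‖(vandermonde v)ᵀ - (vandermonde w)ᵀ‖ ≤ d * d * (d * E ^ d * ε) := by
  simpa using l2_opNorm_le_of_norm_apply_le ((vandermonde v)ᵀ - (vandermonde w)ᵀ) fun i j => by
    rw [sub_apply, transpose_apply, transpose_apply, vandermonde_apply, vandermonde_apply]
    calc ‖v j ^ (i : ℕ) - w j ^ (i : ℕ)‖ ≤ i * E ^ ((i : ℕ) - 1) * ‖v j - w j‖ :=
          norm_pow_sub_pow_le (hv j) (hw j) i
      _ ≤ d * E ^ d * ε := by
          have hε : 0 ≤ ε := (norm_nonneg _).trans (hvw j)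
          gcongr
          · exact i.is_lt.le
          · omega
          · exact hvw j

end Vandermonde

noncomputable def vandermondeTransitionConst (d : ℕ) (δ E : ℝ) : ℝ :=
  (δ ^ d.choose 2)⁻¹ * (d * d * (d ! * (E ^ d) ^ d)) * (d * d * (d * E ^ d))

theorem l2_opNorm_inv_vandermonde_transpose_mul_sub_one_le {𝕜 : Type*} [RCLike 𝕜] {d : ℕ}
    {v w : Fin d → 𝕜} {δ E ε : ℝ} (hδ : 0 < δ) (hsep : ∀ i j, i ≠ j → δ ≤ ‖v i - v j‖)
    (hE : 1 ≤ E) (hv : ∀ j, ‖v j‖ ≤ E) (hw : ∀ j, ‖w j‖ ≤ E) (hvw : ∀ j, ‖w j - v j‖ ≤ ε) :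
    ‖(vandermonde v)ᵀ⁻¹ * (vandermonde w)ᵀ - 1‖ ≤ vandermondeTransitionConst d δ E * ε := by
  have hdet : IsUnit (vandermonde v)ᵀ.det := by
    refine isUnit_iff_ne_zero.mpr (norm_pos_iff.mp ?_)
    rw [det_transpose]
    exact (pow_pos hδ _).trans_le (pow_choose_two_le_norm_det_vandermonde v hδ.le hsep)
  calc ‖(vandermonde v)ᵀ⁻¹ * (vandermonde w)ᵀ - 1‖
      = ‖(vandermonde v)ᵀ⁻¹ * ((vandermonde w)ᵀ - (vandermonde v)ᵀ)‖ := by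
        rw [mul_sub, nonsing_inv_mul _ hdet]
    _ ≤ ‖(vandermonde v)ᵀ⁻¹‖ * ‖(vandermonde w)ᵀ - (vandermonde v)ᵀ‖ := l2_opNorm_mul _ _
    _ ≤ (δ ^ d.choose 2)⁻¹ * (d * d * (d ! * (E ^ d) ^ d)) * (d * d * (d * E ^ d * ε)) := by
        gcongr
        · exact l2_opNorm_inv_vandermonde_transpose_le hδ hsep hE hv
        · exact l2_opNorm_vandermonde_transpose_sub_le hE hw hv hvw
    _ = vandermondeTransitionConst d δ E * ε := by
        rw [vandermondeTransitionConst]; ring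

end Matrix

theorem stmt_9_general (d : ℕ) (K δ B : ℝ) (hδ : 0 < δ) :
    ∃ C : ℝ, 0 ≤ C ∧
      ∀ (a b : ℝ) (lam : Fin d → ℝ → ℂ),
        (∀ j : Fin d, LipschitzOnWith (Real.toNNReal K) (lam j) (Icc a b)) →
        (∀ i j : Fin d, i ≠ j → ∀ x ∈ Icc a b, δ ≤ ‖lam i x - lam j x‖) →
        (∀ j : Fin d, ∀ x ∈ Icc a b, ‖lam j x‖ ≤ B) →
        ∀ M : ℝ → Matrix (Fin d) (Fin d) ℂ,
          (∀ x ∈ Icc a b, ∀ i j : Fin d, M x i j = lam j x ^ (i : ℕ)) →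
          ∀ x ∈ Icc a b, ∀ y ∈ Icc a b,
            ‖(M x)⁻¹ * M y - 1‖ ≤ C * |x - y| ∧
            ‖(M x)⁻¹ * M y‖ ≤ 1 + C * |x - y| := by
  refine ⟨vandermondeTransitionConst d δ (max 1 B) * K.toNNReal,
    by unfold vandermondeTransitionConst; positivity, ?_⟩
  intro a b lam hLip hsep hbound M hM x hx y hy
  have hMV : ∀ z ∈ Icc a b, M z = (vandermonde fun j => lam j z)ᵀ := fun z hz => by
    ext i j
    simp [hM z hz]
  have hE : ∀ z ∈ Icc a b, ∀ j, ‖lam j z‖ ≤ max 1 B :=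
    fun z hz j => (hbound j z hz).trans (le_max_right _ _)
  have hdiff : ‖(M x)⁻¹ * M y - 1‖ ≤
      vandermondeTransitionConst d δ (max 1 B) * K.toNNReal * |x - y| := by
    rw [hMV x hx, hMV y hy, mul_assoc]
    refine l2_opNorm_inv_vandermonde_transpose_mul_sub_one_le hδ
      (fun i j hij => hsep i j hij x hx) (le_max_left _ _) (hE x hx) (hE y hy) fun j => ?_
    simpa [Real.norm_eq_abs, abs_sub_comm] using (hLip j).norm_sub_le hy hx
  exact ⟨hdiff, (norm_le_norm_add_norm_sub' _ 1).trans (add_le_add l2_opNorm_one_le hdiff)⟩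

/-- Transition-matrix estimate for Vandermonde matrices of slowly varying eigenvalues:
if the `λ_j` are `K`-Lipschitz on `[a,b]`, pairwise `δ`-separated and bounded by `B`, then
there is a constant `C` depending only on `d`, `K`, `δ`, `B` with
`‖M(x)⁻¹M(y) − I‖ ≤ C|x−y|` and `‖M(x)⁻¹M(y)‖ ≤ 1 + C|x−y|` in operator norm. -/
theorem stmt_9 (d : ℕ) (hd : 1 ≤ d) (K δ B : ℝ) (hK : 0 ≤ K) (hδ : 0 < δ) (hB : 0 ≤ B) :
    ∃ C : ℝ, 0 ≤ C ∧
      ∀ (a b : ℝ) (lam : Fin d → ℝ → ℂ),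
        (∀ j : Fin d, LipschitzOnWith (Real.toNNReal K) (lam j) (Icc a b)) →
        (∀ i j : Fin d, i ≠ j → ∀ x ∈ Icc a b, δ ≤ ‖lam i x - lam j x‖) →
        (∀ j : Fin d, ∀ x ∈ Icc a b, ‖lam j x‖ ≤ B) →
        ∀ M : ℝ → Matrix (Fin d) (Fin d) ℂ,
          (∀ x ∈ Icc a b, ∀ i j : Fin d, M x i j = lam j x ^ (i : ℕ)) →
          ∀ x ∈ Icc a b, ∀ y ∈ Icc a b,
            ‖(M x)⁻¹ * M y - 1‖ ≤ C * |x - y| ∧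
            ‖(M x)⁻¹ * M y‖ ≤ 1 + C * |x - y| :=
  stmt_9_general d K δ B hδ
end

section
/- Let d ≥ 1, ε > 0, C, C' ≥ 0, K₁, K₂ ≥ 0, L ≥ 0, and let m ≤ n be integers with (n − m)ε ≤ L. Suppose for each k = m,…,n we are given d × d complex matrices A(k) = M(k) D(k) M(k)⁻¹ with M(k) invertible, such that ‖D(k)‖ ≤ 1 + Cε for all k, ‖M(k)⁻¹ M(k−1)‖ ≤ 1 + C'ε for m < k ≤ n, ‖M(n)‖ ≤ K₁, and ‖M(m)⁻¹‖ ≤ K₂ (operator norms). Then ‖A(n) A(n−1) ⋯ A(m)‖ ≤ K₁ K₂ (1 + Cε)^{n−m+1} (1 + C'ε)^{n−m} ≤ K₁ K₂ (1 + Cε) e^{(C + C')L}. -/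
open scoped Matrix.Norms.L2Operator

/-!
Write `A k = M k D k M k⁻¹`. In the product `A n ⋯ A m` the inner factors `M k⁻¹ M (k-1)` of
neighbouring conjugations pair up, so `A n ⋯ A m = M n D n (M n⁻¹ M (n-1)) D (n-1) ⋯ D m M m⁻¹`,
and submultiplicativity of the norm bounds it by `K₁ K₂ (1 + Cε)^(n-m+1) (1 + C'ε)^(n-m)`.
Finally `(1 + cε)^(n-m) ≤ exp (c (n-m) ε) ≤ exp (c L)`.
-/

section Telescoping

variable {R : Type*} [Ring R] (M D N : ℕ → R)

theorem List.prod_range_conj_mul_eq (j : ℕ) (hMN : ∀ i < j, M i * N i = 1)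
    (hNM : ∀ i ≤ j, N i * M i = 1) :
    ((List.range (j + 1)).map fun i => M i * D i * N i).prod * M j =
      M 0 * D 0 * ((List.range j).map fun i => N i * M (i + 1) * D (i + 1)).prod := by
  induction j with
  | zero => simp [mul_assoc, hNM 0 le_rfl]
  | succ j ih =>
    set P := ((List.range (j + 1)).map fun i => M i * D i * N i).prod
    calc _ = P * (M (j + 1) * D (j + 1) * N (j + 1)) * M (j + 1) := by
          rw [List.prod_range_succ _ (j + 1)]
      _ = P * (M j * N j) * M (j + 1) * D (j + 1) := by
          simp only [mul_assoc, hNM (j + 1) le_rfl, hMN j (by omega), mul_one]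
      _ = _ := by
          rw [← mul_assoc P, ih (fun i hi => hMN i (by omega)) (fun i hi => hNM i (by omega)),
            List.prod_range_succ _ j]
          simp only [mul_assoc]

end Telescoping

section NormBound

variable {R : Type*} [SeminormedRing R]

theorem norm_mul_prod_range_le (x : R) (f : ℕ → R) {b : ℝ} (j : ℕ)
    (hf : ∀ i < j, ‖f i‖ ≤ b) :
    ‖x * ((List.range j).map f).prod‖ ≤ ‖x‖ * b ^ j := by
  induction j with
  | zero => simp
  | succ j ih =>
    have hb : 0 ≤ b := (norm_nonneg _).trans (hf j j.lt_succ_self)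
    rw [List.prod_range_succ, ← mul_assoc, pow_succ, ← mul_assoc]
    exact (norm_mul_le _ _).trans <| mul_le_mul (ih fun i hi => hf i (by omega))
      (hf j j.lt_succ_self) (norm_nonneg _) (by positivity)

theorem norm_prod_range_conj_le (M D N : ℕ → R) (j : ℕ) {a b K₁ K₂ : ℝ}
    (hMN : ∀ i ≤ j, M i * N i = 1) (hNM : ∀ i ≤ j, N i * M i = 1)
    (hD : ∀ i ≤ j, ‖D i‖ ≤ a) (hstep : ∀ i < j, ‖N i * M (i + 1)‖ ≤ b)
    (hM : ‖M 0‖ ≤ K₁) (hN : ‖N j‖ ≤ K₂) :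
    ‖((List.range (j + 1)).map fun i => M i * D i * N i).prod‖ ≤
      K₁ * K₂ * a ^ (j + 1) * b ^ j := by
  set P := ((List.range (j + 1)).map fun i => M i * D i * N i).prod
  have hK₁ : 0 ≤ K₁ := (norm_nonneg _).trans hM
  have ha : 0 ≤ a := (norm_nonneg _).trans (hD 0 (Nat.zero_le j))
  have hba : 0 ≤ (b * a) ^ j := by
    rcases j.eq_zero_or_pos with rfl | hj
    · simp
    · exact pow_nonneg (mul_nonneg ((norm_nonneg _).trans (hstep 0 hj)) ha) _
  have hbound : ‖P * M j‖ ≤ K₁ * a * (b * a) ^ j := by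
    rw [List.prod_range_conj_mul_eq M D N j (fun i hi => hMN i hi.le) hNM]
    refine (norm_mul_prod_range_le (b := b * a) _ _ j fun i hi => ?_).trans ?_
    · exact (norm_mul_le _ _).trans <| mul_le_mul (hstep i hi) (hD (i + 1) hi)
        (norm_nonneg _) ((norm_nonneg _).trans (hstep i hi))
    · exact mul_le_mul_of_nonneg_right ((norm_mul_le _ _).trans <|
        mul_le_mul hM (hD 0 (Nat.zero_le j)) (norm_nonneg _) hK₁) hba
  calc ‖P‖ = ‖P * M j * N j‖ := by rw [mul_assoc, hMN j le_rfl, mul_one]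
    _ ≤ K₁ * a * (b * a) ^ j * K₂ :=
      (norm_mul_le _ _).trans <| mul_le_mul hbound hN (norm_nonneg _) ((norm_nonneg _).trans hbound)
    _ = K₁ * K₂ * a ^ (j + 1) * b ^ j := by ring

end NormBound

theorem Real.one_add_mul_pow_le_exp {c ε L : ℝ} {k : ℕ} (hc : 0 ≤ c) (hε : 0 ≤ ε)
    (hk : k * ε ≤ L) : (1 + c * ε) ^ k ≤ Real.exp (c * L) :=
  calc (1 + c * ε) ^ k ≤ Real.exp (c * ε) ^ k :=
        pow_le_pow_left₀ (by positivity) (by linarith [Real.add_one_le_exp (c * ε)]) k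
    _ = Real.exp (k * (c * ε)) := (Real.exp_nat_mul _ _).symm
    _ ≤ Real.exp (c * L) := Real.exp_le_exp.mpr (by nlinarith)

theorem stmt_10_general (d : ℕ) (ε : ℝ) (hε : 0 < ε) (C C' K₁ K₂ L : ℝ)
    (hC : 0 ≤ C) (hC' : 0 ≤ C')
    (m n : ℕ) (hmn : m ≤ n) (hLen : ((n : ℝ) - m) * ε ≤ L)
    (A M D : ℕ → Matrix (Fin d) (Fin d) ℂ)
    (hMunit : ∀ k : ℕ, m ≤ k → k ≤ n → IsUnit (M k))
    (hA : ∀ k : ℕ, m ≤ k → k ≤ n → A k = M k * D k * (M k)⁻¹)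
    (hD : ∀ k : ℕ, m ≤ k → k ≤ n → ‖D k‖ ≤ 1 + C * ε)
    (hMM : ∀ k : ℕ, m < k → k ≤ n → ‖(M k)⁻¹ * M (k - 1)‖ ≤ 1 + C' * ε)
    (hMn : ‖M n‖ ≤ K₁) (hMm : ‖(M m)⁻¹‖ ≤ K₂) :
    ‖((List.range (n - m + 1)).map (fun i => A (n - i))).prod‖ ≤
        K₁ * K₂ * (1 + C * ε) ^ (n - m + 1) * (1 + C' * ε) ^ (n - m) ∧
      K₁ * K₂ * (1 + C * ε) ^ (n - m + 1) * (1 + C' * ε) ^ (n - m) ≤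
        K₁ * K₂ * (1 + C * ε) * Real.exp ((C + C') * L) := by
  have hdet (i : ℕ) (hi : i ≤ n - m) : IsUnit (M (n - i)).det :=
    (Matrix.isUnit_iff_isUnit_det _).mp (hMunit _ (by omega) (by omega))
  have hprod : (List.range (n - m + 1)).map (fun i => A (n - i)) =
      (List.range (n - m + 1)).map fun i => M (n - i) * D (n - i) * (M (n - i))⁻¹ :=
    List.map_congr_left fun i hi => hA _ (by rw [List.mem_range] at hi; omega) (by omega)
  refine ⟨hprod ▸ norm_prod_range_conj_le (fun i => M (n - i)) (fun i => D (n - i))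
    (fun i => (M (n - i))⁻¹) (n - m) (fun i hi => Matrix.mul_nonsing_inv _ (hdet i hi))
    (fun i hi => Matrix.nonsing_inv_mul _ (hdet i hi)) (fun i hi => hD _ (by omega) (by omega))
    (fun i hi => ?_) (by simpa using hMn) (by simpa [Nat.sub_sub_self hmn] using hMm), ?_⟩
  · simpa [Nat.sub_sub] using hMM (n - i) (by omega) (by omega)
  have hK : 0 ≤ K₁ * K₂ := mul_nonneg ((norm_nonneg _).trans hMn) ((norm_nonneg _).trans hMm)
  have hk : ((n - m : ℕ) : ℝ) * ε ≤ L := by rwa [Nat.cast_sub hmn]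
  calc _ = K₁ * K₂ * (1 + C * ε) * ((1 + C * ε) ^ (n - m) * (1 + C' * ε) ^ (n - m)) := by ring
    _ ≤ K₁ * K₂ * (1 + C * ε) * (Real.exp (C * L) * Real.exp (C' * L)) := by
      gcongr
      exacts [Real.one_add_mul_pow_le_exp hC hε.le hk, Real.one_add_mul_pow_le_exp hC' hε.le hk]
    _ = K₁ * K₂ * (1 + C * ε) * Real.exp ((C + C') * L) := by rw [← Real.exp_add, add_mul]

/-- Norm bound for long products of slowly varying transfer matrices
`A(k) = M(k)D(k)M(k)⁻¹`: if `‖D(k)‖ ≤ 1 + Cε`, `‖M(k)⁻¹M(k−1)‖ ≤ 1 + C'ε`,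
`‖M(n)‖ ≤ K₁`, `‖M(m)⁻¹‖ ≤ K₂` and `(n−m)ε ≤ L`, then
`‖A(n)⋯A(m)‖ ≤ K₁K₂(1+Cε)^{n−m+1}(1+C'ε)^{n−m} ≤ K₁K₂(1+Cε)e^{(C+C')L}`. -/
theorem stmt_10 (d : ℕ) (hd : 1 ≤ d) (ε : ℝ) (hε : 0 < ε) (C C' K₁ K₂ L : ℝ)
    (hC : 0 ≤ C) (hC' : 0 ≤ C') (hK₁ : 0 ≤ K₁) (hK₂ : 0 ≤ K₂) (hL : 0 ≤ L)
    (m n : ℕ) (hmn : m ≤ n) (hLen : ((n : ℝ) - m) * ε ≤ L)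
    (A M D : ℕ → Matrix (Fin d) (Fin d) ℂ)
    (hMunit : ∀ k : ℕ, m ≤ k → k ≤ n → IsUnit (M k))
    (hA : ∀ k : ℕ, m ≤ k → k ≤ n → A k = M k * D k * (M k)⁻¹)
    (hD : ∀ k : ℕ, m ≤ k → k ≤ n → ‖D k‖ ≤ 1 + C * ε)
    (hMM : ∀ k : ℕ, m < k → k ≤ n → ‖(M k)⁻¹ * M (k - 1)‖ ≤ 1 + C' * ε)
    (hMn : ‖M n‖ ≤ K₁) (hMm : ‖(M m)⁻¹‖ ≤ K₂) :
    ‖((List.range (n - m + 1)).map (fun i => A (n - i))).prod‖ ≤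
        K₁ * K₂ * (1 + C * ε) ^ (n - m + 1) * (1 + C' * ε) ^ (n - m) ∧
      K₁ * K₂ * (1 + C * ε) ^ (n - m + 1) * (1 + C' * ε) ^ (n - m) ≤
        K₁ * K₂ * (1 + C * ε) * Real.exp ((C + C') * L) :=
  stmt_10_general d ε hε C C' K₁ K₂ L hC hC' m n hmn hLen A M D hMunit hA hD hMM hMn hMm
end
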